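/- arXiv:1807.00492 — 9 statements merged into one kernel-verified Lean document; each statement's English description precedes it below -/
import Mathlib

section
/- Let A > 0 and 0 < λ < 1 be real constants. Then the sum of the series ∑_{k=1}^∞ min{1, λ^k A} is at least ln(1 + λA) / (2 ln(λ^{-1})). -/
/-!
Since `log (1 + x) - log (1 + l x) ≤ log l⁻¹ · min 1 x` for `x ≥ 0`, the terms of the series
bound the increments of `k ↦ log (1 + l ^ k a) / log l⁻¹`, which decreases from `log (1 + a) / log l⁻¹`
to `0`; telescoping gives `log (1 + a) ≤ log l⁻¹ · ∑ₖ min 1 (l ^ k a)`.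
-/

open Filter Topology

namespace Real

theorem log_one_add_sub_log_one_add_mul_le {l x : ℝ} (hl0 : 0 < l) (hl1 : l ≤ 1) (hx : 0 ≤ x) :
    log (1 + x) - log (1 + l * x) ≤ log l⁻¹ * min 1 x := by
  have hx1 : 0 < 1 + x := by linarith
  have hlx : 0 < 1 + l * x := by positivity
  rw [← log_div hx1.ne' hlx.ne']
  rcases le_total x 1 with hxle | hxge
  · rw [min_eq_right hxle]
    have hl : 1 - l ≤ log l⁻¹ := by
      rw [log_inv]
      linarith [log_le_sub_one_of_pos hl0]
    calc log ((1 + x) / (1 + l * x)) ≤ (1 + x) / (1 + l * x) - 1 :=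
          log_le_sub_one_of_pos (div_pos hx1 hlx)
      _ = (1 - l) * x / (1 + l * x) := by field_simp; ring
      _ ≤ (1 - l) * x := div_le_self (by nlinarith) (by nlinarith)
      _ ≤ log l⁻¹ * x := mul_le_mul_of_nonneg_right hl hx
  · rw [min_eq_left hxge, mul_one]
    refine log_le_log (div_pos hx1 hlx) ?_
    rw [div_le_iff₀ hlx, mul_add, inv_mul_cancel_left₀ hl0.ne']
    linarith [one_le_inv₀ hl0 |>.mpr hl1]

theorem log_one_add_sub_log_one_add_pow_mul_le {l a : ℝ} (hl0 : 0 < l) (hl1 : l ≤ 1)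
    (ha : 0 ≤ a) (n : ℕ) :
    log (1 + a) - log (1 + l ^ n * a) ≤ log l⁻¹ * ∑ k ∈ Finset.range n, min 1 (l ^ k * a) := by
  rw [Finset.mul_sum]
  calc log (1 + a) - log (1 + l ^ n * a)
      = ∑ k ∈ Finset.range n, (log (1 + l ^ k * a) - log (1 + l ^ (k + 1) * a)) := by
        rw [Finset.sum_range_sub' (fun k => log (1 + l ^ k * a)), pow_zero, one_mul]
    _ ≤ _ := Finset.sum_le_sum fun k _ => by
        rw [pow_succ', mul_assoc]
        exact log_one_add_sub_log_one_add_mul_le hl0 hl1 (by positivity)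

theorem log_one_add_le_mul_tsum_min {l a : ℝ} (hl0 : 0 < l) (hl1 : l < 1) (ha : 0 ≤ a) :
    log (1 + a) ≤ log l⁻¹ * ∑' k : ℕ, min 1 (l ^ k * a) := by
  have hL : 0 ≤ log l⁻¹ := log_nonneg (one_le_inv₀ hl0 |>.mpr hl1.le)
  have hnonneg (k : ℕ) : 0 ≤ min 1 (l ^ k * a) := le_min zero_le_one (by positivity)
  have hsummable : Summable fun k : ℕ => min 1 (l ^ k * a) :=
    .of_nonneg_of_le hnonneg (fun k => min_le_right _ _)
      ((summable_geometric_of_lt_one hl0.le hl1).mul_right a)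
  have hlim : Tendsto (fun n : ℕ => log (1 + a) - log (1 + l ^ n * a)) atTop (𝓝 (log (1 + a))) := by
    have h := ((((tendsto_pow_atTop_nhds_zero_of_lt_one hl0.le hl1).mul_const a).const_add 1).log
      (by norm_num)).const_sub (log (1 + a))
    simpa using h
  refine le_of_tendsto' hlim fun n => ?_
  calc log (1 + a) - log (1 + l ^ n * a)
      ≤ log l⁻¹ * ∑ k ∈ Finset.range n, min 1 (l ^ k * a) :=
        log_one_add_sub_log_one_add_pow_mul_le hl0 hl1.le ha n
    _ ≤ log l⁻¹ * ∑' k : ℕ, min 1 (l ^ k * a) :=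
        mul_le_mul_of_nonneg_left (hsummable.sum_le_tsum _ fun k _ => hnonneg k) hL

end Real

/-- Let `A > 0` and `0 < l < 1`. Then `∑_{k=1}^∞ min{1, l^k A} ≥ ln(1 + l A) / (2 ln(l⁻¹))`. -/
theorem stmt_0 (A l : ℝ) (hA : 0 < A) (hl0 : 0 < l) (hl1 : l < 1) :
    Real.log (1 + l * A) / (2 * Real.log l⁻¹) ≤ ∑' k : ℕ, min 1 (l ^ (k + 1) * A) := by
  have hL : 0 < Real.log l⁻¹ := Real.log_pos (one_lt_inv₀ hl0 |>.mpr hl1)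
  have hlog : 0 ≤ Real.log (1 + l * A) := Real.log_nonneg (by nlinarith)
  have key := Real.log_one_add_le_mul_tsum_min hl0 hl1 (mul_pos hl0 hA).le
  simp only [← mul_assoc, ← pow_succ] at key
  calc Real.log (1 + l * A) / (2 * Real.log l⁻¹) ≤ Real.log (1 + l * A) / Real.log l⁻¹ :=
        div_le_div_of_nonneg_left hlog hL (by linarith)
    _ ≤ ∑' k : ℕ, min 1 (l ^ (k + 1) * A) := by rwa [div_le_iff₀' hL]
end

section
/- Fix real numbers q > 1 and m > 0, set E_q = (q-1)^{q-1}/q^q, and define g(λ) = (λ - m)/λ^q for λ > m. Then for every y with 0 < y ≤ m^{1-q} E_q there exists a unique λ satisfying m < λ ≤ (q/(q-1)) m and g(λ) = y. -/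
/-- For `q > 1`, `m > 0`, `E_q = (q-1)^(q-1)/q^q` and `g(l) = (l - m)/l^q` on `(m, ∞)`:
for every `0 < y ≤ m^(1-q) E_q` there is a unique `l ∈ (m, q m/(q-1)]` with `g(l) = y`. -/
theorem stmt_2 (q m y : ℝ) (hq : 1 < q) (hm : 0 < m)
    (hy0 : 0 < y) (hy1 : y ≤ m ^ (1 - q) * ((q - 1) ^ (q - 1) / q ^ q)) :
    ∃! l : ℝ, m < l ∧ l ≤ q / (q - 1) * m ∧ (l - m) / l ^ q = y := by
  have hq0 : (0:ℝ) < q := by linarith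
  have hq1 : (0:ℝ) < q - 1 := by linarith
  set lam := q / (q - 1) * m with hlamdef
  have hdiv1 : 1 < q / (q - 1) := (one_lt_div hq1).2 (by linarith)
  have hmlam : m < lam := by
    have := mul_lt_mul_of_pos_right hdiv1 hm
    simpa using this
  have hlampos : 0 < lam := hm.trans hmlam
  set f : ℝ → ℝ := fun l => (l - m) / l ^ q with hfdef
  -- value at lam
  have hval : f lam = m ^ (1 - q) * ((q - 1) ^ (q - 1) / q ^ q) := by
    have h1 : lam ^ q = (q / (q-1)) ^ q * m ^ q := by
      rw [hlamdef, Real.mul_rpow (le_of_lt (div_pos hq0 hq1)) hm.le]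
    have h2 : ((q / (q-1)) : ℝ) ^ q = q ^ q / (q-1) ^ q :=
      Real.div_rpow hq0.le hq1.le q
    have h3 : m ^ (1 - q) = m / m ^ q := by
      rw [Real.rpow_sub hm, Real.rpow_one]
    have h4 : (q - 1) ^ (q - 1) = (q-1) ^ q / (q-1) := by
      rw [Real.rpow_sub hq1, Real.rpow_one]
    have hA : (0:ℝ) < m ^ q := Real.rpow_pos_of_pos hm q
    have hB : (0:ℝ) < (q-1) ^ q := Real.rpow_pos_of_pos hq1 q
    have hC : (0:ℝ) < q ^ q := Real.rpow_pos_of_pos hq0 q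
    rw [hfdef]
    simp only
    rw [h1, h2, h3, h4, hlamdef]
    field_simp
    ring
  -- continuity of f on Icc m lam
  have hcont : ContinuousOn f (Set.Icc m lam) := by
    apply ContinuousOn.div
    · exact (continuousOn_id.sub continuousOn_const)
    · apply ContinuousOn.rpow_const continuousOn_id
      intro x hx
      exact Or.inl (ne_of_gt (lt_of_lt_of_le hm hx.1))
    · intro x hx
      exact ne_of_gt (Real.rpow_pos_of_pos (lt_of_lt_of_le hm hx.1) q)
  -- strict monotonicity
  have hmono : StrictMonoOn f (Set.Icc m lam) := by
    apply strictMonoOn_of_deriv_pos (convex_Icc m lam) hcont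
    intro x hx
    rw [interior_Icc] at hx
    have hx0 : 0 < x := hm.trans hx.1
    have hd1 : HasDerivAt (fun l : ℝ => l ^ q) (q * x ^ (q - 1)) x :=
      Real.hasDerivAt_rpow_const (Or.inl (ne_of_gt hx0))
    have hd2 : HasDerivAt (fun l : ℝ => l - m) 1 x := (hasDerivAt_id x).sub_const m
    have hdenom : x ^ q ≠ 0 := ne_of_gt (Real.rpow_pos_of_pos hx0 q)
    have hd : HasDerivAt f ((1 * x ^ q - (x - m) * (q * x ^ (q - 1))) / (x ^ q) ^ 2) x :=
      hd2.div hd1 hdenom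
    rw [hd.deriv]
    have hxq : x ^ q = x ^ (q - 1) * x := by
      rw [← Real.rpow_add_one (ne_of_gt hx0)]
      ring_nf
    have hxq1 : (0:ℝ) < x ^ (q - 1) := Real.rpow_pos_of_pos hx0 _
    have hnum : 0 < 1 * x ^ q - (x - m) * (q * x ^ (q - 1)) := by
      rw [hxq]
      have key : 0 < q * m - (q - 1) * x := by
        have h := mul_lt_mul_of_pos_left hx.2 hq1
        rw [hlamdef] at h
        have h2 : (q - 1) * (q / (q - 1) * m) = q * m := by field_simp
        linarith [h.trans_eq h2]
      nlinarith
    positivity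
  -- existence via IVT
  have hfm : f m = 0 := by simp [hfdef]
  have hy : y ∈ Set.Ioc (f m) (f lam) := by
    constructor
    · rw [hfm]; exact hy0
    · rw [hval]; exact hy1
  have := intermediate_value_Ioc hmlam.le hcont hy
  obtain ⟨l, hl, hfl⟩ := this
  refine ⟨l, ⟨hl.1, hl.2, hfl⟩, ?_⟩
  intro l' ⟨h1', h2', h3'⟩
  have hl'mem : l' ∈ Set.Icc m lam := ⟨h1'.le, h2'⟩
  have hlmem : l ∈ Set.Icc m lam := ⟨hl.1.le, hl.2⟩
  exact hmono.injOn hl'mem hlmem (h3'.trans hfl.symm)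
end

section
/- Let n ≥ 3 be an integer. There exist constants C₁ > 0 and C₂ > 0, depending only on n, such that for all T > 0 and R > 0 one has C₁ · min{√T, R} ≤ φ_n(T,R) ≤ C₂ · min{√T, R}, where φ_n(T,R) = ∫_0^T ∫_0^R r^{n-2} t^{-n/2} exp(-r²/(4t)) dr dt. -/
/-!
For fixed `t`, the inner integral `f(t) = ∫_0^R r^(n-2) t^(-n/2) e^(-r²/4t) dr` is at most
`c t^(-1/2)` (extend to `r ∈ (0, ∞)`, a Gamma integral) and at most
`R^(n-1) t^(-n/2) / (n-1)` (drop the exponential). Integrating the first bound over `(0, T)`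
gives `O(√T)`; integrating it over `(0, R²)` and the second over `(R², ∞)` gives `O(R)`, the
second being integrable because `n ≥ 3`. Conversely, with `m = min(√T, R)`, on
`t ∈ (m²/2, m²)` and `r ∈ (0, m)` the exponential is at least `e^(-1/2)` and
`t^(-n/2) ≥ m^(-n)`, so `f(t) ≳ m⁻¹` on an interval of length `m²/2`.
-/

open MeasureTheory Real Set

namespace HeatRadial

noncomputable def integrand (n : ℕ) (t r : ℝ) : ℝ :=
  r ^ ((n : ℝ) - 2) * t ^ (-(n : ℝ) / 2) * exp (-(r ^ 2) / (4 * t))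

noncomputable def innerIntegral (n : ℕ) (R t : ℝ) : ℝ :=
  ∫ r in Ioo 0 R, integrand n t r

/-- `∫_0^∞ r^(n-2) e^(-r²/4) dr`, in the closed form given by the Gamma function. -/
noncomputable def gaussianConst (n : ℕ) : ℝ :=
  4 ^ (((n : ℝ) - 1) / 2) * (1 / 2) * Gamma (((n : ℝ) - 1) / 2)

lemma gaussianConst_pos {n : ℕ} (hn : 2 ≤ n) : 0 < gaussianConst n := by
  have hn' : (2 : ℝ) ≤ n := by exact_mod_cast hn
  have := Gamma_pos_of_pos (by linarith : 0 < ((n : ℝ) - 1) / 2)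
  unfold gaussianConst
  positivity

lemma integral_Ioo_rpow {q : ℝ} (hq : -1 < q) {R : ℝ} (hR : 0 ≤ R) :
    ∫ r in Ioo 0 R, r ^ q = R ^ (q + 1) / (q + 1) := by
  rw [← integral_Ioc_eq_integral_Ioo, ← intervalIntegral.integral_of_le hR,
    integral_rpow (Or.inl hq), zero_rpow (by linarith : q + 1 ≠ 0), sub_zero]

lemma integrableOn_Ioo_rpow {q : ℝ} (hq : -1 < q) (R : ℝ) :
    IntegrableOn (fun r : ℝ ↦ r ^ q) (Ioo 0 R) :=
  (intervalIntegral.intervalIntegrable_rpow' hq).1.mono_set Ioo_subset_Ioc_self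

lemma integrand_nonneg (n : ℕ) {t r : ℝ} (ht : 0 < t) (hr : 0 ≤ r) :
    0 ≤ integrand n t r := by
  unfold integrand
  positivity

lemma measurable_integrand (n : ℕ) : Measurable fun p : ℝ × ℝ ↦ integrand n p.1 p.2 := by
  unfold integrand
  fun_prop

lemma integrableOn_integrand {n : ℕ} (hn : 2 ≤ n) (t R : ℝ) :
    IntegrableOn (integrand n t) (Ioo 0 R) := by
  have hq : (0 : ℝ) ≤ n - 2 := by linarith [show (2 : ℝ) ≤ n by exact_mod_cast hn]
  have hcont : Continuous (integrand n t) := by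
    unfold integrand
    exact ((continuous_rpow_const hq).mul continuous_const).mul (by fun_prop)
  exact (hcont.intervalIntegrable 0 R).1.mono_set Ioo_subset_Ioc_self

lemma innerIntegral_nonneg (n : ℕ) (R : ℝ) {t : ℝ} (ht : 0 < t) : 0 ≤ innerIntegral n R t :=
  setIntegral_nonneg measurableSet_Ioo fun _ hr ↦ integrand_nonneg n ht hr.1.le

lemma stronglyMeasurable_innerIntegral (n : ℕ) (R : ℝ) :
    StronglyMeasurable (innerIntegral n R) :=
  (measurable_integrand n).stronglyMeasurable.integral_prod_right'

lemma innerIntegral_le_gaussian {n : ℕ} (hn : 2 ≤ n) (R : ℝ) {t : ℝ} (ht : 0 < t) :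
    innerIntegral n R t ≤ gaussianConst n * t ^ (-(1 : ℝ) / 2) := by
  have hq : (-1 : ℝ) < n - 2 := by linarith [show (2 : ℝ) ≤ n by exact_mod_cast hn]
  have hb : (0 : ℝ) < 1 / (4 * t) := by positivity
  set g : ℝ → ℝ := fun r ↦ r ^ ((n : ℝ) - 2) * exp (-(1 / (4 * t)) * r ^ (2 : ℝ))
  have hsplit : ∀ r, integrand n t r = t ^ (-(n : ℝ) / 2) * g r := fun r ↦ by
    simp only [integrand, g, rpow_two]
    ring_nf
  have hpow : t ^ (-(n : ℝ) / 2) * (1 / (4 * t)) ^ (-((n : ℝ) - 2 + 1) / 2) =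
      4 ^ (((n : ℝ) - 1) / 2) * t ^ (-(1 : ℝ) / 2) := by
    rw [one_div, inv_rpow (by positivity), ← rpow_neg (by positivity),
      mul_rpow (by norm_num) ht.le, mul_left_comm, ← rpow_add ht]
    ring_nf
  calc innerIntegral n R t = t ^ (-(n : ℝ) / 2) * ∫ r in Ioo 0 R, g r := by
        simp only [innerIntegral, hsplit, integral_const_mul]
    _ ≤ t ^ (-(n : ℝ) / 2) * ∫ r in Ioi 0, g r := by
        gcongr
        · filter_upwards [ae_restrict_mem measurableSet_Ioi] with r (hr : 0 < r)
          positivity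
        · exact integrableOn_rpow_mul_exp_neg_mul_rpow hq two_pos hb
        · exact Ioo_subset_Ioi_self
    _ = gaussianConst n * t ^ (-(1 : ℝ) / 2) := by
        rw [integral_rpow_mul_exp_neg_mul_rpow two_pos hq hb, ← mul_assoc, ← mul_assoc, hpow,
          gaussianConst]
        ring_nf

lemma innerIntegral_le_rpow {n : ℕ} (hn : 2 ≤ n) {R t : ℝ} (hR : 0 ≤ R) (ht : 0 < t) :
    innerIntegral n R t ≤ R ^ ((n : ℝ) - 1) / (n - 1) * t ^ (-(n : ℝ) / 2) := by
  have hq : (-1 : ℝ) < n - 2 := by linarith [show (2 : ℝ) ≤ n by exact_mod_cast hn]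
  calc innerIntegral n R t ≤ ∫ r in Ioo 0 R, r ^ ((n : ℝ) - 2) * t ^ (-(n : ℝ) / 2) := by
        refine setIntegral_mono_on (integrableOn_integrand hn t R)
          ((integrableOn_Ioo_rpow hq R).mul_const _) measurableSet_Ioo fun r hr ↦ ?_
        have : 0 ≤ r ^ ((n : ℝ) - 2) * t ^ (-(n : ℝ) / 2) := by
          have := hr.1.le
          positivity
        refine mul_le_of_le_one_right this (exp_le_one_iff.2 ?_)
        rw [neg_div]
        exact neg_nonpos.2 (by positivity)
    _ = R ^ ((n : ℝ) - 1) / (n - 1) * t ^ (-(n : ℝ) / 2) := by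
        rw [integral_mul_const, integral_Ioo_rpow hq hR]
        ring_nf

lemma le_innerIntegral {n : ℕ} (hn : 2 ≤ n) {R m t : ℝ} (hm : 0 < m) (hmR : m ≤ R)
    (hmt : m ^ 2 / 2 < t) (htm : t < m ^ 2) :
    exp (-(1 / 2)) / (n - 1) * m⁻¹ ≤ innerIntegral n R t := by
  have hn' : (2 : ℝ) ≤ n := by exact_mod_cast hn
  have hq : (-1 : ℝ) < n - 2 := by linarith
  have ht : 0 < t := lt_trans (by positivity) hmt
  have hconst : (m ^ 2) ^ (-(n : ℝ) / 2) * m ^ ((n : ℝ) - 1) = m⁻¹ := by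
    rw [← rpow_natCast, ← rpow_mul hm.le, ← rpow_add hm, ← rpow_neg_one]
    ring_nf
  calc exp (-(1 / 2)) / (n - 1) * m⁻¹
      = ∫ r in Ioo 0 m, (m ^ 2) ^ (-(n : ℝ) / 2) * exp (-(1 / 2)) * r ^ ((n : ℝ) - 2) := by
        rw [integral_const_mul, integral_Ioo_rpow hq hm.le, ← hconst]
        ring_nf
    _ ≤ ∫ r in Ioo 0 m, integrand n t r := by
        refine setIntegral_mono_on ((integrableOn_Ioo_rpow hq m).const_mul _)
          (integrableOn_integrand hn t m) measurableSet_Ioo fun r ⟨hr0, hrm⟩ ↦ ?_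
        have hpow : (m ^ 2) ^ (-(n : ℝ) / 2) ≤ t ^ (-(n : ℝ) / 2) :=
          rpow_le_rpow_of_nonpos ht htm.le (by linarith)
        have hexp : exp (-(1 / 2)) ≤ exp (-(r ^ 2) / (4 * t)) := by
          rw [exp_le_exp, neg_div, neg_le_neg_iff, div_le_iff₀ (by positivity)]
          nlinarith
        have := rpow_nonneg hr0.le ((n : ℝ) - 2)
        calc (m ^ 2) ^ (-(n : ℝ) / 2) * exp (-(1 / 2)) * r ^ ((n : ℝ) - 2)
            ≤ t ^ (-(n : ℝ) / 2) * exp (-(r ^ 2) / (4 * t)) * r ^ ((n : ℝ) - 2) := by gcongr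
          _ = integrand n t r := by unfold integrand; ring
    _ ≤ innerIntegral n R t :=
        setIntegral_mono_set (integrableOn_integrand hn t R)
          (ae_restrict_of_forall_mem measurableSet_Ioo fun r hr ↦ integrand_nonneg n ht hr.1.le)
          (Ioo_subset_Ioo le_rfl hmR).eventuallyLE

lemma integrableOn_innerIntegral {n : ℕ} (hn : 2 ≤ n) (R T : ℝ) :
    IntegrableOn (innerIntegral n R) (Ioo 0 T) := by
  refine Integrable.mono'
    ((integrableOn_Ioo_rpow (q := -(1 : ℝ) / 2) (by norm_num) T).const_mul (gaussianConst n))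
    (stronglyMeasurable_innerIntegral n R).aestronglyMeasurable ?_
  filter_upwards [ae_restrict_mem measurableSet_Ioo] with t ht
  rw [norm_of_nonneg (innerIntegral_nonneg n R ht.1)]
  exact innerIntegral_le_gaussian hn R ht.1

lemma integrableOn_Ioi_innerIntegral {n : ℕ} (hn : 3 ≤ n) {R c : ℝ} (hR : 0 ≤ R)
    (hc : 0 < c) :
    IntegrableOn (innerIntegral n R) (Ioi c) := by
  have hn' : (3 : ℝ) ≤ n := by exact_mod_cast hn
  refine Integrable.mono'
    ((integrableOn_Ioi_rpow_of_lt (a := -(n : ℝ) / 2) (by linarith) hc).const_mul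
      (R ^ ((n : ℝ) - 1) / (n - 1)))
    (stronglyMeasurable_innerIntegral n R).aestronglyMeasurable ?_
  filter_upwards [ae_restrict_mem measurableSet_Ioi] with t (ht : c < t)
  rw [norm_of_nonneg (innerIntegral_nonneg n R (hc.trans ht))]
  exact innerIntegral_le_rpow (by omega) hR (hc.trans ht)

lemma integral_innerIntegral_le_sqrt {n : ℕ} (hn : 2 ≤ n) (R : ℝ) {T : ℝ} (hT : 0 ≤ T) :
    ∫ t in Ioo 0 T, innerIntegral n R t ≤ 2 * gaussianConst n * √T :=
  calc ∫ t in Ioo 0 T, innerIntegral n R t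
      ≤ ∫ t in Ioo 0 T, gaussianConst n * t ^ (-(1 : ℝ) / 2) :=
        setIntegral_mono_on (integrableOn_innerIntegral hn R T)
          ((integrableOn_Ioo_rpow (by norm_num) T).const_mul _) measurableSet_Ioo
          fun t ht ↦ innerIntegral_le_gaussian hn R ht.1
    _ = 2 * gaussianConst n * √T := by
        rw [integral_const_mul, integral_Ioo_rpow (by norm_num) hT, sqrt_eq_rpow]
        ring_nf

lemma integral_Ioi_innerIntegral_le {n : ℕ} (hn : 3 ≤ n) {R : ℝ} (hR : 0 < R) :
    ∫ t in Ioi (R ^ 2), innerIntegral n R t ≤ 2 / ((n - 1) * (n - 2)) * R := by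
  have hn' : (3 : ℝ) ≤ n := by exact_mod_cast hn
  have hexp : -(n : ℝ) / 2 < -1 := by linarith
  have hR2 : 0 < R ^ 2 := by positivity
  calc ∫ t in Ioi (R ^ 2), innerIntegral n R t
      ≤ ∫ t in Ioi (R ^ 2), R ^ ((n : ℝ) - 1) / (n - 1) * t ^ (-(n : ℝ) / 2) :=
        setIntegral_mono_on (integrableOn_Ioi_innerIntegral hn hR.le hR2)
          ((integrableOn_Ioi_rpow_of_lt hexp hR2).const_mul _) measurableSet_Ioi
          fun t ht ↦ innerIntegral_le_rpow (by omega) hR.le (hR2.trans ht)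
    _ = 2 / ((n - 1) * (n - 2)) * R := by
        have hRR : (R ^ 2) ^ (-(n : ℝ) / 2 + 1) = R / R ^ ((n : ℝ) - 1) := by
          rw [← rpow_natCast, ← rpow_mul hR.le, eq_div_iff (rpow_pos_of_pos hR _).ne',
            ← rpow_add hR]
          ring_nf
          exact rpow_one R
        have h1 : (n : ℝ) - 1 ≠ 0 := by linarith
        have h2 : (n : ℝ) - 2 ≠ 0 := by linarith
        rw [integral_const_mul, integral_Ioi_rpow_of_lt hexp hR2, hRR,
          show -(n : ℝ) / 2 + 1 = -((n - 2) / 2) by ring]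
        field_simp

lemma integral_innerIntegral_le_radius {n : ℕ} (hn : 3 ≤ n) {R : ℝ} (hR : 0 < R) (T : ℝ) :
    ∫ t in Ioo 0 T, innerIntegral n R t ≤
      (2 * gaussianConst n + 2 / ((n - 1) * (n - 2))) * R := by
  have hR2 : 0 < R ^ 2 := by positivity
  have hIoc : IntegrableOn (innerIntegral n R) (Ioc 0 (R ^ 2)) :=
    (integrableOn_Ioc_iff_integrableOn_Ioo enorm_ne_top).2
      (integrableOn_innerIntegral (by omega) R _)
  have hIoi := integrableOn_Ioi_innerIntegral hn hR.le hR2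
  have hsplit : Ioc 0 (R ^ 2) ∪ Ioi (R ^ 2) = Ioi 0 := Ioc_union_Ioi_eq_Ioi hR2.le
  calc ∫ t in Ioo 0 T, innerIntegral n R t
      ≤ ∫ t in Ioi 0, innerIntegral n R t :=
        setIntegral_mono_set (hsplit ▸ hIoc.union hIoi)
          (ae_restrict_of_forall_mem measurableSet_Ioi fun t ht ↦ innerIntegral_nonneg n R ht)
          Ioo_subset_Ioi_self.eventuallyLE
    _ = (∫ t in Ioo 0 (R ^ 2), innerIntegral n R t) +
          ∫ t in Ioi (R ^ 2), innerIntegral n R t := by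
        rw [← hsplit, setIntegral_union (Ioc_disjoint_Ioi le_rfl) measurableSet_Ioi hIoc hIoi,
          integral_Ioc_eq_integral_Ioo]
    _ ≤ 2 * gaussianConst n * √(R ^ 2) + 2 / ((n - 1) * (n - 2)) * R :=
        add_le_add (integral_innerIntegral_le_sqrt (n := n) (by omega) R hR2.le)
          (integral_Ioi_innerIntegral_le hn hR)
    _ = (2 * gaussianConst n + 2 / ((n - 1) * (n - 2))) * R := by
        rw [sqrt_sq hR.le]
        ring

lemma le_integral_innerIntegral {n : ℕ} (hn : 2 ≤ n) {R T m : ℝ} (hm : 0 < m) (hmR : m ≤ R)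
    (hmT : m ^ 2 ≤ T) :
    exp (-(1 / 2)) / (2 * (n - 1)) * m ≤ ∫ t in Ioo 0 T, innerIntegral n R t := by
  have hsub : Ioo (m ^ 2 / 2) (m ^ 2) ⊆ Ioo 0 T := fun t ht ↦
    ⟨lt_trans (by positivity) ht.1, ht.2.trans_le hmT⟩
  calc exp (-(1 / 2)) / (2 * (n - 1)) * m
      = ∫ _ in Ioo (m ^ 2 / 2) (m ^ 2), exp (-(1 / 2)) / (n - 1) * m⁻¹ := by
        rw [setIntegral_const, volume_real_Ioo_of_le (by linarith [sq_nonneg m]), smul_eq_mul]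
        field_simp
        ring
    _ ≤ ∫ t in Ioo (m ^ 2 / 2) (m ^ 2), innerIntegral n R t :=
        setIntegral_mono_on (integrableOn_const measure_Ioo_lt_top.ne)
          ((integrableOn_innerIntegral hn R T).mono_set hsub) measurableSet_Ioo
          fun t ht ↦ le_innerIntegral hn hm hmR ht.1 ht.2
    _ ≤ ∫ t in Ioo 0 T, innerIntegral n R t :=
        setIntegral_mono_set (integrableOn_innerIntegral hn R T)
          (ae_restrict_of_forall_mem measurableSet_Ioo
            fun t ht ↦ innerIntegral_nonneg n R ht.1)
          hsub.eventuallyLE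

end HeatRadial

open HeatRadial

/-- For integer `n ≥ 3` there exist `C₁, C₂ > 0` depending only on `n` such that for all
`T, R > 0`, `C₁ min{√T, R} ≤ φ_n(T,R) ≤ C₂ min{√T, R}`, where
`φ_n(T,R) = ∫_0^T ∫_0^R r^(n-2) t^(-n/2) exp(-r²/(4t)) dr dt`. -/
theorem stmt_4 (n : ℕ) (hn : 3 ≤ n) :
    ∃ C₁ > (0:ℝ), ∃ C₂ > (0:ℝ), ∀ T R : ℝ, 0 < T → 0 < R →
      C₁ * min (Real.sqrt T) R ≤
        (∫ t in Set.Ioo (0:ℝ) T, ∫ r in Set.Ioo (0:ℝ) R,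
          r ^ ((n:ℝ) - 2) * t ^ (-(n:ℝ) / 2) * Real.exp (-(r ^ 2) / (4 * t))) ∧
      (∫ t in Set.Ioo (0:ℝ) T, ∫ r in Set.Ioo (0:ℝ) R,
          r ^ ((n:ℝ) - 2) * t ^ (-(n:ℝ) / 2) * Real.exp (-(r ^ 2) / (4 * t))) ≤
        C₂ * min (Real.sqrt T) R := by
  have hn' : (3 : ℝ) ≤ n := by exact_mod_cast hn
  have hc := gaussianConst_pos (by omega : 2 ≤ n)
  have hn1 : (0 : ℝ) < n - 1 := by linarith
  have hn2 : (0 : ℝ) < n - 2 := by linarith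
  have hC₂ : 0 < 2 * gaussianConst n + 2 / ((n - 1) * (n - 2)) := by positivity
  refine ⟨exp (-(1 / 2)) / (2 * (n - 1)), by positivity, _, hC₂,
    fun T R hT hR ↦ ⟨?_, ?_⟩⟩
  · have hmT : min √T R ^ 2 ≤ T := by
      calc min √T R ^ 2 ≤ √T ^ 2 := by gcongr; exact min_le_left _ _
        _ = T := sq_sqrt hT.le
    exact le_integral_innerIntegral (by omega) (lt_min (sqrt_pos.2 hT) hR) (min_le_right ..) hmT
  · rw [mul_min_of_nonneg _ _ hC₂.le]
    refine le_min ?_ (integral_innerIntegral_le_radius hn hR T)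
    calc _ ≤ 2 * gaussianConst n * √T := integral_innerIntegral_le_sqrt (by omega) R hT.le
      _ ≤ _ := by gcongr; linarith [show (0 : ℝ) ≤ 2 / ((n - 1) * (n - 2)) by positivity]
end

section
/- There exist universal constants C₁ > 0 and C₂ > 0 such that: (i) for all R > 0 and 0 < T < R², C₁ √T ≤ φ₂(T,R) ≤ C₂ √T; and (ii) for all R > 0 and T ≥ R², C₁ · R(1 + ln(T/R²)) ≤ φ₂(T,R) ≤ C₂ · R(1 + ln(T/R²)). Here φ₂(T,R) = ∫_0^T ∫_0^R t^{-1} exp(-r²/(4t)) dr dt. -/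
open MeasureTheory Real Set

/-! The inner integral `J(t) = ∫_0^R t⁻¹ e^{-r²/(4t)} dr` is comparable to `min(√t, R) / t`,
with constants `e^{-1/4}` and `√π`: for `√t ≤ R` the Gaussian of width `√t` fits into `(0, R)`
and `J(t) ≍ t^{-1/2}`, while for `√t ≥ R` the exponential factor lies in `[e^{-1/4}, 1]` on
`(0, R)` and `J(t) ≍ R / t`. Integrating `min(√t, R) / t` over `(0, T)` gives exactly `2√T` for
`T ≤ R²` and `R (2 + ln(T/R²))` for `T ≥ R²`. -/

noncomputable def phi2Inner (R t : ℝ) : ℝ :=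
  ∫ r in Ioo 0 R, t⁻¹ * exp (-(r ^ 2) / (4 * t))

theorem mul_setIntegral_le_setIntegral_le_mul {α : Type*} [MeasurableSpace α] {μ : Measure α}
    {s : Set α} {f g : α → ℝ} {a b : ℝ} (hs : MeasurableSet s)
    (hf : AEStronglyMeasurable f (μ.restrict s)) (hg : IntegrableOn g s μ)
    (hlo : ∀ x ∈ s, a * g x ≤ f x) (hf0 : ∀ x ∈ s, 0 ≤ f x) (hhi : ∀ x ∈ s, f x ≤ b * g x) :
    a * ∫ x in s, g x ∂μ ≤ ∫ x in s, f x ∂μ ∧ ∫ x in s, f x ∂μ ≤ b * ∫ x in s, g x ∂μ := by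
  have hfi : IntegrableOn f s μ := (hg.const_mul b).mono' hf <|
    (ae_restrict_iff' hs).2 <| .of_forall fun x hx => by
      rw [norm_of_nonneg (hf0 x hx)]; exact hhi x hx
  rw [← integral_const_mul, ← integral_const_mul]
  exact ⟨setIntegral_mono_on (hg.const_mul a) hfi hs hlo,
    setIntegral_mono_on hfi (hg.const_mul b) hs hhi⟩

theorem stronglyMeasurable_phi2Inner (R : ℝ) : StronglyMeasurable (phi2Inner R) :=
  StronglyMeasurable.integral_prod_right (ν := volume.restrict (Ioo 0 R))
    (f := fun t r => t⁻¹ * exp (-(r ^ 2) / (4 * t))) (by fun_prop)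

theorem phi2Inner_nonneg (R : ℝ) {t : ℝ} (ht : 0 ≤ t) : 0 ≤ phi2Inner R t :=
  integral_nonneg fun _ => by positivity

theorem phi2Inner_eq_mul_integral_gaussian (R t : ℝ) :
    phi2Inner R t = t⁻¹ * ∫ r in Ioo 0 R, exp (-(4 * t)⁻¹ * r ^ 2) := by
  rw [phi2Inner, ← integral_const_mul]
  congr 1 with r
  ring_nf

theorem integrableOn_exp_neg_inv_mul_sq {t : ℝ} (ht : 0 < t) (s : Set ℝ) :
    IntegrableOn (fun r : ℝ => exp (-(4 * t)⁻¹ * r ^ 2)) s :=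
  (integrable_exp_neg_mul_sq (by positivity)).integrableOn

theorem phi2Inner_le_sqrt_pi_div_sqrt (R : ℝ) {t : ℝ} (ht : 0 < t) :
    phi2Inner R t ≤ √π / √t := by
  rw [phi2Inner_eq_mul_integral_gaussian]
  calc t⁻¹ * ∫ r in Ioo 0 R, exp (-(4 * t)⁻¹ * r ^ 2)
      ≤ t⁻¹ * ∫ r in Ioi 0, exp (-(4 * t)⁻¹ * r ^ 2) := by
        refine mul_le_mul_of_nonneg_left ?_ (by positivity)
        exact setIntegral_mono_set (integrableOn_exp_neg_inv_mul_sq ht _)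
          (.of_forall fun _ => (exp_pos _).le) Ioo_subset_Ioi_self.eventuallyLE
    _ = √π / √t := by
        rw [integral_gaussian_Ioi, div_inv_eq_mul, sqrt_mul' _ (by positivity), sqrt_mul' _ ht.le,
          show √4 = 2 by rw [show (4 : ℝ) = 2 ^ 2 by norm_num, sqrt_sq two_pos.le]]
        field_simp
        rw [sq_sqrt ht.le]

theorem phi2Inner_le_div {R t : ℝ} (hR : 0 ≤ R) (ht : 0 < t) : phi2Inner R t ≤ R / t := by
  rw [phi2Inner_eq_mul_integral_gaussian]
  calc t⁻¹ * ∫ r in Ioo 0 R, exp (-(4 * t)⁻¹ * r ^ 2) ≤ t⁻¹ * ∫ _ in Ioo 0 R, (1 : ℝ) := by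
        refine mul_le_mul_of_nonneg_left ?_ (by positivity)
        refine setIntegral_mono_on (integrableOn_exp_neg_inv_mul_sq ht _)
          (integrableOn_const measure_Ioo_lt_top.ne) measurableSet_Ioo fun r _ => ?_
        exact exp_le_one_iff.2 (by nlinarith [inv_pos.2 (by positivity : 0 < 4 * t)])
    _ = R / t := by simp [hR, div_eq_inv_mul]

theorem phi2Inner_le_sqrt_pi_mul {R t : ℝ} (hR : 0 ≤ R) (ht : 0 < t) :
    phi2Inner R t ≤ √π * (min √t R / t) := by
  rcases le_total √t R with h | h
  · rw [min_eq_left h, sqrt_div_self, ← div_eq_mul_inv]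
    exact phi2Inner_le_sqrt_pi_div_sqrt R ht
  · rw [min_eq_right h]
    exact (phi2Inner_le_div hR ht).trans <|
      le_mul_of_one_le_left (by positivity) (one_le_sqrt.2 (by linarith [pi_gt_three]))

theorem exp_neg_quarter_mul_le_phi2Inner {R t : ℝ} (hR : 0 < R) (ht : 0 < t) :
    exp (-4⁻¹) * (min √t R / t) ≤ phi2Inner R t := by
  set m := min √t R
  have hm : 0 < m := lt_min (sqrt_pos.2 ht) hR
  rw [phi2Inner_eq_mul_integral_gaussian]
  calc exp (-4⁻¹) * (m / t) = t⁻¹ * ∫ _ in Ioo 0 m, exp (-4⁻¹) := by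
        rw [setIntegral_const, volume_real_Ioo_of_le hm.le, sub_zero, smul_eq_mul]
        ring
    _ ≤ t⁻¹ * ∫ r in Ioo 0 m, exp (-(4 * t)⁻¹ * r ^ 2) := by
        refine mul_le_mul_of_nonneg_left ?_ (by positivity)
        refine setIntegral_mono_on (integrableOn_const measure_Ioo_lt_top.ne)
          (integrableOn_exp_neg_inv_mul_sq ht _) measurableSet_Ioo fun r hr => exp_le_exp.2 ?_
        have hr2 : r ^ 2 ≤ t := by
          have := (hr.2.trans_le (min_le_left _ _)).le
          nlinarith [sq_sqrt ht.le, hr.1]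
        rw [neg_mul, neg_le_neg_iff, inv_mul_le_iff₀ (by positivity)]
        linarith
    _ ≤ t⁻¹ * ∫ r in Ioo 0 R, exp (-(4 * t)⁻¹ * r ^ 2) := by
        refine mul_le_mul_of_nonneg_left ?_ (by positivity)
        exact setIntegral_mono_set (integrableOn_exp_neg_inv_mul_sq ht _)
          (.of_forall fun _ => (exp_pos _).le)
          (Ioo_subset_Ioo_right (min_le_right _ _)).eventuallyLE

theorem integrableOn_min_sqrt_div {R : ℝ} (hR : 0 ≤ R) {T : ℝ} (hT : 0 ≤ T) :
    IntegrableOn (fun t => min √t R / t) (Ioo 0 T) := by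
  have hrpow : IntegrableOn (fun t : ℝ => t ^ (-(1 / 2) : ℝ)) (Ioo 0 T) :=
    (intervalIntegrable_iff_integrableOn_Ioo_of_le hT).1
      (intervalIntegral.intervalIntegrable_rpow' (by norm_num))
  have hmeas : Measurable fun t : ℝ => min √t R / t :=
    ((by fun_prop : Measurable fun t : ℝ => √t).min measurable_const).div measurable_id
  refine hrpow.mono' hmeas.aestronglyMeasurable <| (ae_restrict_iff' measurableSet_Ioo).2 <|
    .of_forall fun t ht => ?_
  rw [norm_of_nonneg (div_nonneg (le_min (sqrt_nonneg _) hR) ht.1.le), rpow_neg ht.1.le,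
    ← sqrt_eq_rpow, ← sqrt_div_self]
  exact div_le_div_of_nonneg_right (min_le_left _ _) ht.1.le

theorem integral_min_sqrt_div_of_le_sq {R T : ℝ} (hR : 0 ≤ R) (hT : 0 ≤ T) (hTR : T ≤ R ^ 2) :
    ∫ t in Ioo 0 T, min √t R / t = 2 * √T := by
  calc ∫ t in Ioo 0 T, min √t R / t = ∫ t in Ioo 0 T, t ^ (-(1 / 2) : ℝ) :=
        setIntegral_congr_fun measurableSet_Ioo fun t ht => by
          have hle : √t ≤ R := by
            simpa [sqrt_sq hR] using sqrt_le_sqrt (ht.2.le.trans hTR)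
          rw [min_eq_left hle, sqrt_div_self, sqrt_eq_rpow, ← rpow_neg ht.1.le]
    _ = 2 * √T := by
        rw [← integral_Ioc_eq_integral_Ioo, ← intervalIntegral.integral_of_le hT,
          integral_rpow (.inl (by norm_num)), zero_rpow (by norm_num), sqrt_eq_rpow]
        norm_num
        ring

theorem integral_min_sqrt_div_of_sq_le {R T : ℝ} (hR : 0 < R) (hRT : R ^ 2 ≤ T) :
    ∫ t in Ioo 0 T, min √t R / t = R * (2 + log (T / R ^ 2)) := by
  have hR2 : 0 < R ^ 2 := by positivity
  have hT : 0 ≤ T := hR2.le.trans hRT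
  have hint : IntervalIntegrable (fun t => min √t R / t) volume 0 T :=
    (intervalIntegrable_iff_integrableOn_Ioo_of_le hT).2 (integrableOn_min_sqrt_div hR.le hT)
  have hmid : R ^ 2 ∈ uIcc 0 T := by
    rw [uIcc_of_le hT]
    exact ⟨hR2.le, hRT⟩
  have htail : ∫ t in R ^ 2..T, min √t R / t = R * log (T / R ^ 2) := by
    rw [← integral_inv_of_pos hR2 (hR2.trans_le hRT), ← intervalIntegral.integral_const_mul]
    refine intervalIntegral.integral_congr fun t ht => ?_
    rw [uIcc_of_le hRT] at ht
    have hle : R ≤ √t := by simpa [sqrt_sq hR.le] using sqrt_le_sqrt ht.1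
    simp only [min_eq_right hle, div_eq_mul_inv]
  rw [← integral_Ioc_eq_integral_Ioo, ← intervalIntegral.integral_of_le hT,
    ← intervalIntegral.integral_add_adjacent_intervals
      (hint.mono_set (uIcc_subset_uIcc left_mem_uIcc hmid))
      (hint.mono_set (uIcc_subset_uIcc hmid right_mem_uIcc)),
    intervalIntegral.integral_of_le hR2.le, integral_Ioc_eq_integral_Ioo,
    integral_min_sqrt_div_of_le_sq hR.le hR2.le le_rfl, sqrt_sq hR.le, htail]
  ring

theorem integral_phi2Inner_bounds {R : ℝ} (hR : 0 < R) (T : ℝ) :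
    exp (-4⁻¹) * ∫ t in Ioo 0 T, min √t R / t ≤ ∫ t in Ioo 0 T, phi2Inner R t ∧
      ∫ t in Ioo 0 T, phi2Inner R t ≤ √π * ∫ t in Ioo 0 T, min √t R / t := by
  rcases lt_or_ge T 0 with hT | hT
  · simp [Ioo_eq_empty_of_le hT.le]
  exact mul_setIntegral_le_setIntegral_le_mul measurableSet_Ioo
    (stronglyMeasurable_phi2Inner R).aestronglyMeasurable (integrableOn_min_sqrt_div hR.le hT)
    (fun t ht => exp_neg_quarter_mul_le_phi2Inner hR ht.1) (fun t ht => phi2Inner_nonneg R ht.1.le)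
    (fun t ht => phi2Inner_le_sqrt_pi_mul hR.le ht.1)

/-- There exist universal `C₁, C₂ > 0` such that for `φ₂(T,R) = ∫_0^T ∫_0^R t⁻¹ e^{-r²/(4t)} dr dt`:
(i) `C₁ √T ≤ φ₂(T,R) ≤ C₂ √T` whenever `0 < T < R²`;
(ii) `C₁ R(1 + ln(T/R²)) ≤ φ₂(T,R) ≤ C₂ R(1 + ln(T/R²))` whenever `0 < R² ≤ T`. -/
theorem stmt_5 :
    ∃ C₁ > (0:ℝ), ∃ C₂ > (0:ℝ),
      (∀ T R : ℝ, 0 < R → 0 < T → T < R ^ 2 →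
        C₁ * Real.sqrt T ≤
          (∫ t in Set.Ioo (0:ℝ) T, ∫ r in Set.Ioo (0:ℝ) R,
            t⁻¹ * Real.exp (-(r ^ 2) / (4 * t))) ∧
        (∫ t in Set.Ioo (0:ℝ) T, ∫ r in Set.Ioo (0:ℝ) R,
            t⁻¹ * Real.exp (-(r ^ 2) / (4 * t))) ≤ C₂ * Real.sqrt T) ∧
      (∀ T R : ℝ, 0 < R → R ^ 2 ≤ T →
        C₁ * (R * (1 + Real.log (T / R ^ 2))) ≤
          (∫ t in Set.Ioo (0:ℝ) T, ∫ r in Set.Ioo (0:ℝ) R,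
            t⁻¹ * Real.exp (-(r ^ 2) / (4 * t))) ∧
        (∫ t in Set.Ioo (0:ℝ) T, ∫ r in Set.Ioo (0:ℝ) R,
            t⁻¹ * Real.exp (-(r ^ 2) / (4 * t))) ≤ C₂ * (R * (1 + Real.log (T / R ^ 2)))) := by
  refine ⟨exp (-4⁻¹), exp_pos _, 2 * √π, by positivity, ?_, ?_⟩
  · intro T R hR hT hTR
    obtain ⟨hlo, hhi⟩ := integral_phi2Inner_bounds hR T
    rw [integral_min_sqrt_div_of_le_sq hR.le hT.le hTR.le] at hlo hhi
    refine ⟨le_trans ?_ hlo, hhi.trans_eq (by ring)⟩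
    nlinarith [exp_pos (-4⁻¹), sqrt_nonneg T]
  · intro T R hR hRT
    obtain ⟨hlo, hhi⟩ := integral_phi2Inner_bounds hR T
    rw [integral_min_sqrt_div_of_sq_le hR hRT] at hlo hhi
    have hlog : 0 ≤ log (T / R ^ 2) := log_nonneg ((one_le_div (by positivity)).2 hRT)
    refine ⟨le_trans ?_ hlo, hhi.trans ?_⟩
    · gcongr
      linarith
    · nlinarith [sqrt_nonneg π, mul_nonneg (sqrt_nonneg π) (mul_nonneg hR.le hlog)]
end

section
/- Let n ≥ 3 be an integer. There exists a constant C > 0, depending only on n, such that for every 0 < ρ ≤ 1 and every x̃ ∈ ℝ^{n-1} with |x̃| ≤ ρ, one has ∫_0^2 ∫_{B(0,ρ)} (4πt)^{-n/2} exp(-|x̃ - ỹ|²/(4t)) dỹ dt ≥ C · σ^{1/(n-1)}, where B(0,ρ) = {ỹ ∈ ℝ^{n-1} : |ỹ| < ρ} and σ is the Lebesgue measure of B(0,ρ) in ℝ^{n-1}. -/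
/-!
For `t ∈ (ρ²/4, ρ²/2)` and `x, y` in the ball `B(0, ρ)` we have `|x - y|² ≤ 4ρ² < 16t`, so the
kernel is at least `(2πρ²)^{-n/2} e^{-4}` there; integrating over the ball and over this time
interval gives `(ρ²/4) (2πρ²)^{-n/2} e^{-4} σ`, a constant multiple of `ρ`, while
`σ^{1/(n-1)} = ω^{1/(n-1)} ρ` for `ω` the volume of the unit ball. The time integral over `(0, 2)`
dominates this because the inner integral is nonnegative and bounded by the full Gaussian
integral `(4πt)^{-1/2}`, which is integrable near `t = 0`.
-/

open MeasureTheory Real Set Metric Module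

/-- `Φ(z, t)` for the heat kernel `Φ` of `ℝⁿ`, which depends on `z` only through `‖z‖`; for `V` a
hyperplane of `ℝⁿ` this is the restriction of `Φ(·, t)` to `V`. -/
noncomputable def heatKernel {V : Type*} [Norm V] (n : ℕ) (t : ℝ) (z : V) : ℝ :=
  (4 * π * t) ^ (-(n : ℝ) / 2) * exp (-‖z‖ ^ 2 / (4 * t))

lemma heatKernel_nonneg {V : Type*} [Norm V] (n : ℕ) {t : ℝ} (ht : 0 ≤ t) (z : V) :
    0 ≤ heatKernel n t z := by
  unfold heatKernel
  positivity

lemma mul_exp_neg_four_le_heatKernel {V : Type*} [SeminormedAddGroup V] (n : ℕ) {ρ t : ℝ}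
    (hρ : 0 < ρ) (ht : t ∈ Icc (ρ ^ 2 / 4) (ρ ^ 2 / 2)) {z : V} (hz : ‖z‖ ≤ 2 * ρ) :
    (2 * π * ρ ^ 2) ^ (-(n : ℝ) / 2) * exp (-4) ≤ heatKernel n t z := by
  have ht0 : 0 < t := lt_of_lt_of_le (by positivity) ht.1
  have hz2 : ‖z‖ ^ 2 ≤ 4 * ρ ^ 2 := by nlinarith [norm_nonneg z]
  unfold heatKernel
  gcongr ?_ * exp ?_
  · exact rpow_le_rpow_of_nonpos (by positivity) (by nlinarith [ht.2, pi_pos])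
      (by linarith [(Nat.cast_nonneg n : (0 : ℝ) ≤ n)])
  · rw [neg_div, neg_le_neg_iff, div_le_iff₀ (by positivity)]
    nlinarith [ht.1]

section InnerProductSpace

variable {V : Type*} [NormedAddCommGroup V] [InnerProductSpace ℝ V] [FiniteDimensional ℝ V]
  [MeasurableSpace V] [BorelSpace V]

lemma integral_heatKernel (n : ℕ) {t : ℝ} (ht : 0 < t) :
    ∫ z : V, heatKernel n t z = (4 * π * t) ^ (((finrank ℝ V : ℝ) - n) / 2) := by
  calc ∫ z : V, heatKernel n t z
      = (4 * π * t) ^ (-(n : ℝ) / 2) * ∫ z : V, exp (-(4 * t)⁻¹ * ‖z‖ ^ 2) := by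
        rw [← integral_const_mul]
        congr 1 with z
        rw [heatKernel, neg_mul, ← div_eq_inv_mul, neg_div (4 * t)]
    _ = (4 * π * t) ^ (-(n : ℝ) / 2) * (4 * π * t) ^ ((finrank ℝ V : ℝ) / 2) := by
        rw [GaussianFourier.integral_rexp_neg_mul_sq_norm (by positivity), div_inv_eq_mul]
        ring_nf
    _ = (4 * π * t) ^ (((finrank ℝ V : ℝ) - n) / 2) := by
        rw [← rpow_add (by positivity)]
        ring_nf

lemma integrable_heatKernel (n : ℕ) {t : ℝ} (ht : 0 < t) :
    Integrable (heatKernel (V := V) n t) :=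
  -- a nonzero Bochner integral certifies integrability
  .of_integral_ne_zero (by rw [integral_heatKernel n ht]; positivity)

lemma integrableOn_Ioo_setIntegral_heatKernel {n : ℕ} (hn : n < finrank ℝ V + 2) (x : V)
    (s : Set V) {T : ℝ} (hT : 0 < T) :
    IntegrableOn (fun t ↦ ∫ y in s, heatKernel n t (x - y)) (Ioo 0 T) := by
  set r : ℝ := ((finrank ℝ V : ℝ) - n) / 2
  have hr : -1 < r := by
    have : (n : ℝ) < finrank ℝ V + 2 := by exact_mod_cast hn
    simp only [r]
    linarith
  have hdom : IntegrableOn (fun t ↦ (4 * π) ^ r * t ^ r) (Ioo 0 T) :=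
    ((intervalIntegral.integrableOn_Ioo_rpow_iff hT).2 hr).const_mul _
  have hmeas : Measurable fun p : ℝ × V ↦ heatKernel n p.1 (x - p.2) := by
    unfold heatKernel
    fun_prop
  refine hdom.mono' hmeas.aestronglyMeasurable.integral_prod_right' ?_
  refine ae_restrict_of_forall_mem measurableSet_Ioo fun t ht ↦ ?_
  have hint : Integrable fun y ↦ heatKernel n t (x - y) :=
    (integrable_heatKernel n ht.1).comp_sub_left x
  calc ‖∫ y in s, heatKernel n t (x - y)‖
      = ∫ y in s, heatKernel n t (x - y) :=
        norm_of_nonneg (integral_nonneg fun y ↦ heatKernel_nonneg n ht.1.le _)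
    _ ≤ ∫ y, heatKernel n t (x - y) :=
        setIntegral_le_integral hint (.of_forall fun y ↦ heatKernel_nonneg n ht.1.le _)
    _ = (4 * π) ^ r * t ^ r := by
        rw [integral_sub_left_eq_self (heatKernel n t) volume x, integral_heatKernel n ht.1,
          mul_rpow (by positivity) ht.1.le]

lemma le_integral_Ioo_setIntegral_heatKernel_ball {n : ℕ} (hn : n < finrank ℝ V + 2) {ρ : ℝ}
    (hρ : 0 < ρ) (hρ2 : ρ ≤ 2) {x : V} (hx : ‖x‖ ≤ ρ) :
    ρ ^ 2 / 4 * ((2 * π * ρ ^ 2) ^ (-(n : ℝ) / 2) * exp (-4) * volume.real (ball (0 : V) ρ)) ≤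
      ∫ t in Ioo 0 2, ∫ y in ball 0 ρ, heatKernel n t (x - y) := by
  set K := (2 * π * ρ ^ 2) ^ (-(n : ℝ) / 2) * exp (-4)
  have hsub : Ioo (ρ ^ 2 / 4) (ρ ^ 2 / 2) ⊆ Ioo 0 2 := fun t ht ↦
    ⟨lt_trans (by positivity) ht.1, ht.2.trans_le (by nlinarith)⟩
  have hint := integrableOn_Ioo_setIntegral_heatKernel hn x (ball 0 ρ) two_pos
  have hlow : ∀ t ∈ Ioo (ρ ^ 2 / 4) (ρ ^ 2 / 2),
      K * volume.real (ball (0 : V) ρ) ≤ ∫ y in ball 0 ρ, heatKernel n t (x - y) := by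
    intro t ht
    refine setIntegral_ge_of_const_le_real measurableSet_ball measure_ball_lt_top.ne
      (fun y hy ↦ mul_exp_neg_four_le_heatKernel n hρ (Ioo_subset_Icc_self ht) ?_)
      ((integrable_heatKernel n (hsub ht).1).comp_sub_left x).integrableOn
    calc ‖x - y‖ ≤ ‖x‖ + ‖y‖ := norm_sub_le x y
      _ ≤ 2 * ρ := by linarith [mem_ball_zero_iff.mp hy]
  calc ρ ^ 2 / 4 * (K * volume.real (ball (0 : V) ρ))
      = K * volume.real (ball (0 : V) ρ) * volume.real (Ioo (ρ ^ 2 / 4) (ρ ^ 2 / 2)) := by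
        rw [Real.volume_real_Ioo_of_le (by linarith [sq_nonneg ρ])]
        ring
    _ ≤ ∫ t in Ioo (ρ ^ 2 / 4) (ρ ^ 2 / 2), ∫ y in ball 0 ρ, heatKernel n t (x - y) :=
        setIntegral_ge_of_const_le_real measurableSet_Ioo (by simp) hlow (hint.mono_set hsub)
    _ ≤ ∫ t in Ioo 0 2, ∫ y in ball 0 ρ, heatKernel n t (x - y) :=
        setIntegral_mono_set hint
          (ae_restrict_of_forall_mem measurableSet_Ioo fun t ht ↦
            integral_nonneg fun y ↦ heatKernel_nonneg n ht.1.le _)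
          (.of_forall hsub)

lemma volume_real_ball_zero {ρ : ℝ} (hρ : 0 < ρ) :
    volume.real (ball (0 : V) ρ) = ρ ^ finrank ℝ V * volume.real (ball (0 : V) 1) := by
  rw [measureReal_def, measureReal_def, Measure.addHaar_ball_of_pos volume _ hρ,
    ENNReal.toReal_mul, ENNReal.toReal_ofReal (by positivity)]

lemma mul_le_integral_Ioo_setIntegral_heatKernel_ball {ρ : ℝ} (hρ : 0 < ρ) (hρ2 : ρ ≤ 2)
    {x : V} (hx : ‖x‖ ≤ ρ) :
    exp (-4) / 4 * (2 * π) ^ (-(finrank ℝ V + 1 : ℝ) / 2) * volume.real (ball (0 : V) 1) * ρ ≤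
      ∫ t in Ioo 0 2, ∫ y in ball 0 ρ, heatKernel (finrank ℝ V + 1) t (x - y) := by
  have hρpow : (ρ ^ 2) ^ (-(finrank ℝ V + 1 : ℝ) / 2) = (ρ ^ (finrank ℝ V + 1))⁻¹ := by
    rw [← rpow_natCast, ← rpow_mul hρ.le, ← rpow_natCast, ← rpow_neg hρ.le]
    push_cast
    ring_nf
  convert le_integral_Ioo_setIntegral_heatKernel_ball (Nat.lt_succ_self _) hρ hρ2 hx
    using 1
  push_cast
  rw [volume_real_ball_zero hρ, mul_rpow (x := 2 * π) (by positivity) (by positivity), hρpow]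
  field_simp
  ring

end InnerProductSpace

/-- For integer `n ≥ 3` there is `C > 0` depending only on `n` such that for every
`0 < ρ ≤ 1` and every `x̃ ∈ ℝ^{n-1}` with `|x̃| ≤ ρ`,
`∫_0^2 ∫_{B(0,ρ)} (4πt)^{-n/2} exp(-|x̃-ỹ|²/(4t)) dỹ dt ≥ C σ^{1/(n-1)}`,
where `σ` is the Lebesgue measure of the ball `B(0,ρ) ⊂ ℝ^{n-1}`. -/
theorem stmt_6 (n : ℕ) (hn : 3 ≤ n) :
    ∃ C > (0:ℝ), ∀ ρ : ℝ, 0 < ρ → ρ ≤ 1 →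
      ∀ x : EuclideanSpace ℝ (Fin (n - 1)), ‖x‖ ≤ ρ →
        C * ((volume (Metric.ball (0 : EuclideanSpace ℝ (Fin (n - 1))) ρ)).toReal
              ^ (1 / ((n:ℝ) - 1))) ≤
          ∫ t in Set.Ioo (0:ℝ) 2,
            ∫ y in Metric.ball (0 : EuclideanSpace ℝ (Fin (n - 1))) ρ,
              (4 * Real.pi * t) ^ (-(n:ℝ) / 2) * Real.exp (-‖x - y‖ ^ 2 / (4 * t)) := by
  obtain ⟨d, rfl⟩ : ∃ d, n = d + 1 := ⟨n - 1, by omega⟩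
  have hd : d ≠ 0 := by omega
  have hfinrank : finrank ℝ (EuclideanSpace ℝ (Fin (d + 1 - 1))) = d := finrank_euclideanSpace_fin
  have hexponent : 1 / ((d + 1 : ℕ) - 1 : ℝ) = (d : ℝ)⁻¹ := by push_cast; ring
  set ω := volume.real (ball (0 : EuclideanSpace ℝ (Fin d)) 1)
  have hω : 0 < ω :=
    ENNReal.toReal_pos (measure_ball_pos volume 0 one_pos).ne' measure_ball_lt_top.ne
  set c := exp (-4) / 4 * (2 * π) ^ (-(d + 1 : ℝ) / 2) * ω
  refine ⟨c / ω ^ (d : ℝ)⁻¹, by positivity, fun ρ hρ hρ1 x hx ↦ ?_⟩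
  have key := mul_le_integral_Ioo_setIntegral_heatKernel_ball hρ (by linarith) hx
  rw [hfinrank] at key
  refine (le_of_eq ?_).trans key
  rw [hexponent, ← measureReal_def, volume_real_ball_zero hρ, hfinrank,
    mul_rpow (by positivity) hω.le, pow_rpow_inv_natCast hρ.le hd]
  field_simp
  simp only [c, ω, neg_div]
  ring
end

section
/- There exists a universal constant C > 0 such that for every 0 < ρ ≤ 1 and every x̃ ∈ ℝ with |x̃| ≤ ρ, one has ∫_0^2 ∫_{-ρ}^{ρ} (4πt)^{-1} exp(-(x̃ - ỹ)²/(4t)) dỹ dt ≥ C · σ · ln(1 + 1/σ), where σ = 2ρ is the length of the interval (-ρ, ρ). -/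
open MeasureTheory Real

/-!
For `t ≥ ρ²` every point of `(-ρ, ρ)` lies within distance `2ρ ≤ 2√t` of `x`, so the inner
integral is at least `2ρ / (4π e t)`; integrating `1/t` over `(ρ², 2)` produces
`2ρ log (2/ρ²) ≥ 2ρ log (1 + 1/(2ρ))`. The only delicate point is that the outer integral is
a genuine one: the Gaussian integral bounds the inner integral by `(4πt)^{-1/2}`, which is
integrable near `t = 0`.
-/

/-- The heat kernel `Φ(·, t)` of `ℝ²` at a point of norm `|r|`. -/
noncomputable def planeHeatKernel (t r : ℝ) : ℝ :=
  (4 * π * t)⁻¹ * exp (-r ^ 2 / (4 * t))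

section planeHeatKernel

variable {t : ℝ}

lemma planeHeatKernel_nonneg (ht : 0 ≤ t) (r : ℝ) : 0 ≤ planeHeatKernel t r := by
  unfold planeHeatKernel; positivity

lemma continuous_planeHeatKernel (t : ℝ) : Continuous (planeHeatKernel t) := by
  unfold planeHeatKernel; fun_prop

lemma le_planeHeatKernel_of_sq_le {r : ℝ} (ht : 0 < t) (hr : r ^ 2 ≤ 4 * t) :
    (4 * π * t)⁻¹ * (exp 1)⁻¹ ≤ planeHeatKernel t r := by
  refine mul_le_mul_of_nonneg_left ?_ (by positivity)
  rw [← exp_neg, exp_le_exp, neg_div, neg_le_neg_iff, div_le_one (by positivity)]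
  exact hr

lemma integrable_exp_neg_sub_sq_div (x : ℝ) (ht : 0 < t) :
    Integrable fun y ↦ exp (-(x - y) ^ 2 / (4 * t)) := by
  refine ((integrable_exp_neg_mul_sq (inv_pos.2 (by positivity : 0 < 4 * t))).comp_sub_right
    x).congr (Filter.Eventually.of_forall fun y ↦ ?_)
  simp only
  ring_nf

lemma integral_exp_neg_sub_sq_div (x : ℝ) :
    ∫ y, exp (-(x - y) ^ 2 / (4 * t)) = √(4 * π * t) := by
  calc ∫ y, exp (-(x - y) ^ 2 / (4 * t))
      = ∫ y, exp (-(4 * t)⁻¹ * (y - x) ^ 2) := by congr 1 with y; ring_nf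
    _ = ∫ y, exp (-(4 * t)⁻¹ * y ^ 2) := integral_sub_right_eq_self (fun y ↦ exp (-_ * y ^ 2)) x
    _ = √(4 * π * t) := by rw [integral_gaussian, div_inv_eq_mul]; ring_nf

lemma setIntegral_planeHeatKernel_le (x : ℝ) (s : Set ℝ) (ht : 0 < t) :
    ∫ y in s, planeHeatKernel t (x - y) ≤ t ^ (-(1 / 2) : ℝ) := by
  have hπ : 1 ≤ 4 * π := by linarith [pi_gt_three]
  calc ∫ y in s, planeHeatKernel t (x - y)
      = (4 * π * t)⁻¹ * ∫ y in s, exp (-(x - y) ^ 2 / (4 * t)) := integral_const_mul _ _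
    _ ≤ (4 * π * t)⁻¹ * ∫ y, exp (-(x - y) ^ 2 / (4 * t)) :=
        mul_le_mul_of_nonneg_left (setIntegral_le_integral (integrable_exp_neg_sub_sq_div x ht)
          (Filter.Eventually.of_forall fun _ ↦ (exp_pos _).le)) (by positivity)
    _ = (√(4 * π * t))⁻¹ := by
        rw [integral_exp_neg_sub_sq_div x, ← div_eq_inv_mul, sqrt_div_self]
    _ ≤ (√t)⁻¹ := by
        gcongr
        exact le_mul_of_one_le_left ht.le hπ
    _ = t ^ (-(1 / 2) : ℝ) := by rw [rpow_neg ht.le, ← sqrt_eq_rpow]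

lemma integrableOn_setIntegral_planeHeatKernel (x : ℝ) (s : Set ℝ) {b : ℝ} (hb : 0 < b) :
    IntegrableOn (fun t ↦ ∫ y in s, planeHeatKernel t (x - y)) (Set.Ioo 0 b) := by
  have hmeas : AEStronglyMeasurable (fun t ↦ ∫ y in s, planeHeatKernel t (x - y))
      (volume.restrict (Set.Ioo 0 b)) := by
    refine AEStronglyMeasurable.integral_prod_right' (f := fun p : ℝ × ℝ ↦
      planeHeatKernel p.1 (x - p.2)) ?_
    unfold planeHeatKernel
    exact Measurable.aestronglyMeasurable (by fun_prop)
  have hdom : IntegrableOn (fun t : ℝ ↦ t ^ (-(1 / 2) : ℝ)) (Set.Ioo 0 b) :=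
    (intervalIntegral.integrableOn_Ioo_rpow_iff hb).2 (by norm_num)
  refine hdom.mono' hmeas ?_
  filter_upwards [ae_restrict_mem measurableSet_Ioo] with t ht
  rw [norm_of_nonneg (integral_nonneg fun y ↦ planeHeatKernel_nonneg ht.1.le _)]
  exact setIntegral_planeHeatKernel_le x s ht.1

lemma le_setIntegral_planeHeatKernel {ρ x : ℝ} (hx : |x| ≤ ρ) (ht : ρ ^ 2 ≤ t) (ht0 : 0 < t) :
    (4 * π * t)⁻¹ * (exp 1)⁻¹ * (2 * ρ) ≤ ∫ y in Set.Ioo (-ρ) ρ, planeHeatKernel t (x - y) := by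
  have hρ : 0 ≤ ρ := (abs_nonneg x).trans hx
  have hx' := abs_le.mp hx
  calc (4 * π * t)⁻¹ * (exp 1)⁻¹ * (2 * ρ)
      = ∫ _ in Set.Ioo (-ρ) ρ, (4 * π * t)⁻¹ * (exp 1)⁻¹ := by
        rw [setIntegral_const, measureReal_def, volume_Ioo, ENNReal.toReal_ofReal (by linarith),
          smul_eq_mul]
        ring
    _ ≤ ∫ y in Set.Ioo (-ρ) ρ, planeHeatKernel t (x - y) := by
        refine setIntegral_mono_on (integrableOn_const measure_Ioo_lt_top.ne)
          (((continuous_planeHeatKernel t).comp (continuous_sub_left x)).integrableOn_Icc.mono_set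
            Set.Ioo_subset_Icc_self)
          measurableSet_Ioo fun y hy ↦ le_planeHeatKernel_of_sq_le ht0 ?_
        nlinarith [hy.1, hy.2]

end planeHeatKernel

lemma integral_Ioo_const_mul_inv (c : ℝ) {a b : ℝ} (ha : 0 < a) (hab : a ≤ b) :
    ∫ t in Set.Ioo a b, c * t⁻¹ = c * log (b / a) := by
  rw [integral_const_mul, ← integral_Ioc_eq_integral_Ioo, ← intervalIntegral.integral_of_le hab,
    integral_inv_of_pos ha (ha.trans_le hab)]

lemma log_one_add_inv_two_mul_le {ρ : ℝ} (hρ : 0 < ρ) (hρ1 : ρ ≤ 1) :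
    log (1 + 1 / (2 * ρ)) ≤ log (2 / ρ ^ 2) := by
  refine log_le_log (by positivity) ?_
  rw [le_div_iff₀ (by positivity)]
  field_simp
  nlinarith

/-- There is a universal `C > 0` such that for every `0 < ρ ≤ 1` and every `x̃ ∈ ℝ` with
`|x̃| ≤ ρ`, `∫_0^2 ∫_{-ρ}^{ρ} (4πt)⁻¹ exp(-(x̃-ỹ)²/(4t)) dỹ dt ≥ C σ ln(1 + 1/σ)`,
where `σ = 2ρ`. -/
theorem stmt_7 :
    ∃ C > (0:ℝ), ∀ ρ : ℝ, 0 < ρ → ρ ≤ 1 → ∀ x : ℝ, |x| ≤ ρ →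
      C * ((2 * ρ) * Real.log (1 + 1 / (2 * ρ))) ≤
        ∫ t in Set.Ioo (0:ℝ) 2, ∫ y in Set.Ioo (-ρ) ρ,
          (4 * Real.pi * t)⁻¹ * Real.exp (-(x - y) ^ 2 / (4 * t)) := by
  refine ⟨(4 * π * exp 1)⁻¹, by positivity, fun ρ hρ hρ1 x hx ↦ ?_⟩
  change _ ≤ ∫ t in Set.Ioo 0 2, ∫ y in Set.Ioo (-ρ) ρ, planeHeatKernel t (x - y)
  have hρ2 : 0 < ρ ^ 2 := by positivity
  have hρ2le : ρ ^ 2 ≤ 2 := by nlinarith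
  have hInt := integrableOn_setIntegral_planeHeatKernel x (Set.Ioo (-ρ) ρ) two_pos
  set c := (4 * π)⁻¹ * (exp 1)⁻¹ * (2 * ρ)
  calc (4 * π * exp 1)⁻¹ * ((2 * ρ) * log (1 + 1 / (2 * ρ)))
      = c * log (1 + 1 / (2 * ρ)) := by rw [mul_inv]; ring
    _ ≤ c * log (2 / ρ ^ 2) := by
        gcongr ?_ * ?_
        exact log_one_add_inv_two_mul_le hρ hρ1
    _ = ∫ t in Set.Ioo (ρ ^ 2) 2, c * t⁻¹ := (integral_Ioo_const_mul_inv c hρ2 hρ2le).symm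
    _ ≤ ∫ t in Set.Ioo (ρ ^ 2) 2, ∫ y in Set.Ioo (-ρ) ρ, planeHeatKernel t (x - y) := by
        refine setIntegral_mono_on ?_ (hInt.mono_set (Set.Ioo_subset_Ioo_left hρ2.le))
          measurableSet_Ioo fun t ht ↦ ?_
        · exact (continuousOn_const.mul (continuousOn_inv₀.mono fun t ht ↦
            (hρ2.trans_le ht.1).ne')).integrableOn_Icc.mono_set Set.Ioo_subset_Icc_self
        · have := le_setIntegral_planeHeatKernel hx ht.1.le (hρ2.trans ht.1)
          rw [mul_inv] at this
          linarith
    _ ≤ ∫ t in Set.Ioo 0 2, ∫ y in Set.Ioo (-ρ) ρ, planeHeatKernel t (x - y) :=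
        setIntegral_mono_set hInt (by
          filter_upwards [ae_restrict_mem measurableSet_Ioo] with t ht
          exact integral_nonneg fun y ↦ planeHeatKernel_nonneg ht.1.le _)
          (Set.Ioo_subset_Ioo_left hρ2.le).eventuallyLE
end

section
/- Let q > 1, set E_q = (q-1)^{q-1}/q^q, and let m ≥ 0 be an integer. Suppose x_0, x_1, ..., x_m are real numbers with x_0 > 0 such that x_{k-1} = x_k (1 - x_k)^{q-1} for every 1 ≤ k ≤ m, and 0 < x_k ≤ min{1/2, E_q} for every 1 ≤ k ≤ m. Then 1/x_0 ≤ 1/x_m + 10(q-1)m. -/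
/-! Each step of the recursion costs little in `1/x`: for `y = x k ≤ 1/2`,
`(1 - y)⁻¹ ≤ exp (2y)`, so `1/x (k-1) = (1/y) (1 - y)^{-(q-1)} ≤ (1/y) exp (2(q-1)y)`.
The bound `y ≤ E_q` keeps `(q-1) y ≤ ((q-1)/q)^q ≤ e⁻¹` small, so the exponential is at most
`1 + 8(q-1)y`, and the increments `1/x (k-1) - 1/x k ≤ 10(q-1)` telescope. -/

open Real

lemma le_add_mul_of_le_succ_add {a : ℕ → ℝ} {c : ℝ} {m : ℕ}
    (h : ∀ k < m, a k ≤ a (k + 1) + c) : a 0 ≤ a m + c * m := by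
  induction m with
  | zero => simp
  | succ n ih =>
    have := ih fun k hk ↦ h k (hk.trans n.lt_succ_self)
    have := h n n.lt_succ_self
    push_cast
    linarith

lemma sub_one_mul_rpow_div_rpow_le_exp_neg_one {q : ℝ} (hq : 1 < q) :
    (q - 1) * ((q - 1) ^ (q - 1) / q ^ q) ≤ exp (-1) := by
  have hq0 : 0 < q := by linarith
  have hq1 : 0 < q - 1 := by linarith
  have hbase : (q - 1) / q ≤ exp (-1 / q) := by
    rw [sub_div, div_self hq0.ne']
    linarith [add_one_le_exp (-1 / q), neg_div q 1]
  calc (q - 1) * ((q - 1) ^ (q - 1) / q ^ q) = ((q - 1) / q) ^ q := by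
        rw [div_rpow hq1.le hq0.le, mul_div_assoc', ← rpow_one_add' hq1.le (by linarith)]
        ring_nf
    _ ≤ exp (-1 / q) ^ q := rpow_le_rpow (by positivity) hbase hq0.le
    _ = exp (-1) := by rw [← exp_mul, div_mul_cancel₀ _ hq0.ne']

lemma inv_one_sub_le_exp_two_mul {y : ℝ} (hy : 0 ≤ y) (hy2 : y ≤ 1 / 2) :
    (1 - y)⁻¹ ≤ exp (2 * y) := by
  calc (1 - y)⁻¹ ≤ 1 + 2 * y := by
        rw [inv_le_iff_one_le_mul₀ (by linarith)]
        nlinarith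
    _ ≤ exp (2 * y) := by linarith [add_one_le_exp (2 * y)]

lemma exp_le_one_add_four_mul {t : ℝ} (ht : 0 ≤ t) (ht2 : t ≤ 3 / 4) :
    exp t ≤ 1 + 4 * t := by
  calc exp t ≤ 1 / (1 - t) := exp_bound_div_one_sub_of_interval ht (by linarith)
    _ ≤ 1 + 4 * t := by
        rw [div_le_iff₀ (by linarith)]
        nlinarith

lemma inv_one_sub_rpow_le {p y : ℝ} (hp : 0 ≤ p) (hy : 0 ≤ y) (hy2 : y ≤ 1 / 2)
    (hpy : p * y ≤ 3 / 8) : ((1 - y) ^ p)⁻¹ ≤ 1 + 8 * (p * y) := by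
  calc ((1 - y) ^ p)⁻¹ = (1 - y)⁻¹ ^ p := (inv_rpow (by linarith) p).symm
    _ ≤ exp (2 * y) ^ p := rpow_le_rpow (inv_nonneg.mpr (by linarith)) (inv_one_sub_le_exp_two_mul hy hy2) hp
    _ = exp (2 * (p * y)) := by rw [← exp_mul]; ring_nf
    _ ≤ 1 + 8 * (p * y) := by
        linarith [exp_le_one_add_four_mul (t := 2 * (p * y)) (by positivity) (by linarith)]

lemma one_div_mul_one_sub_rpow_le {p y : ℝ} (hp : 0 ≤ p) (hy : 0 < y) (hy2 : y ≤ 1 / 2)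
    (hpy : p * y ≤ 3 / 8) : 1 / (y * (1 - y) ^ p) ≤ 1 / y + 10 * p := by
  calc 1 / (y * (1 - y) ^ p) = 1 / y * ((1 - y) ^ p)⁻¹ := by
        rw [one_div, one_div, mul_inv]
    _ ≤ 1 / y * (1 + 8 * (p * y)) := by
        gcongr
        exact inv_one_sub_rpow_le hp hy.le hy2 hpy
    _ ≤ 1 / y + 10 * p := by
        field_simp
        nlinarith

theorem stmt_16_general (q : ℝ) (hq : 1 < q) (m : ℕ) (x : ℕ → ℝ)
    (hrec : ∀ k : ℕ, 1 ≤ k → k ≤ m → x (k - 1) = x k * (1 - x k) ^ (q - 1))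
    (hbnd : ∀ k : ℕ, 1 ≤ k → k ≤ m →
      0 < x k ∧ x k ≤ min (1 / 2) ((q - 1) ^ (q - 1) / q ^ q)) :
    1 / x 0 ≤ 1 / x m + 10 * (q - 1) * m := by
  refine le_add_mul_of_le_succ_add (a := fun k ↦ 1 / x k) fun k hk ↦ ?_
  obtain ⟨hpos, hle⟩ := hbnd (k + 1) k.succ_pos hk
  rw [le_min_iff] at hle
  have hsmall : (q - 1) * x (k + 1) ≤ 3 / 8 := by
    calc (q - 1) * x (k + 1) ≤ (q - 1) * ((q - 1) ^ (q - 1) / q ^ q) := by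
          gcongr; linarith
      _ ≤ exp (-1) := sub_one_mul_rpow_div_rpow_le_exp_neg_one hq
      _ ≤ 3 / 8 := by linarith [exp_neg_one_lt_d9]
  have hstep := hrec (k + 1) k.succ_pos hk
  rw [Nat.add_sub_cancel] at hstep
  rw [hstep]
  exact one_div_mul_one_sub_rpow_le (by linarith) hpos hle.1 hsmall

/-- For `q > 1`, `E_q = (q-1)^(q-1)/q^q` and an integer `m ≥ 0`: if `x 0 > 0`,
`x (k-1) = x k * (1 - x k)^(q-1)` for `1 ≤ k ≤ m`, and `0 < x k ≤ min{1/2, E_q}` for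
`1 ≤ k ≤ m`, then `1/x 0 ≤ 1/x m + 10(q-1)m`. -/
theorem stmt_16 (q : ℝ) (hq : 1 < q) (m : ℕ) (x : ℕ → ℝ) (hx0 : 0 < x 0)
    (hrec : ∀ k : ℕ, 1 ≤ k → k ≤ m → x (k - 1) = x k * (1 - x k) ^ (q - 1))
    (hbnd : ∀ k : ℕ, 1 ≤ k → k ≤ m →
      0 < x k ∧ x k ≤ min (1 / 2) ((q - 1) ^ (q - 1) / q ^ q)) :
    1 / x 0 ≤ 1 / x m + 10 * (q - 1) * m :=
  stmt_16_general q hq m x hrec hbnd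
end

section
/- Let d ≥ 1 be an integer. There exists a constant C > 0, depending only on d, such that for every ρ > 0, every t > 0, and every x̃ ∈ ℝ^d with |x̃| ≤ ρ, one has ∫_{B(x̃,ρ)} exp(-|ỹ|²/(4t)) dỹ ≥ C ∫_{B(0,ρ)} exp(-|ỹ|²/(4t)) dỹ, where B(z,ρ) denotes the open Euclidean ball in ℝ^d of center z and radius ρ. -/
open MeasureTheory

/-- Key geometric fact: for `‖x‖ ≤ ρ`, the intersection `B(x,ρ) ∩ B(0,r)` contains a ball of
radius `min r ρ / 2`, hence its volume is at least `2⁻ᵈ` times that of `B(0,ρ) ∩ B(0,r)`. -/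
lemma stmt_17_meas (d : ℕ) (hd : 1 ≤ d) (ρ r : ℝ) (hρ : 0 < ρ) (hr : 0 < r)
    (x : EuclideanSpace ℝ (Fin d)) (hx : ‖x‖ ≤ ρ) :
    ENNReal.ofReal ((1/2 : ℝ) ^ d) *
        volume (Metric.ball (0 : EuclideanSpace ℝ (Fin d)) ρ ∩ Metric.ball 0 r) ≤
      volume (Metric.ball x ρ ∩ Metric.ball (0 : EuclideanSpace ℝ (Fin d)) r) := by
  haveI : Nonempty (Fin d) := Fin.pos_iff_nonempty.mp hd
  haveI : Nontrivial (EuclideanSpace ℝ (Fin d)) := inferInstance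
  set m : ℝ := min r ρ with hm_def
  have hm : 0 < m := lt_min hr hρ
  set s : ℝ := m / (2 * ρ) with hs_def
  have hs0 : 0 < s := by positivity
  have hs1 : s ≤ 1/2 := by
    rw [hs_def, div_le_iff₀ (by positivity)]
    nlinarith [min_le_right r ρ]
  have hsub : Metric.ball (s • x) (m/2) ⊆ Metric.ball x ρ ∩ Metric.ball 0 r := by
    intro y hy
    rw [Metric.mem_ball, dist_eq_norm] at hy
    have hsρ : s * ρ = m / 2 := by
      rw [hs_def]; field_simp
    constructor
    · rw [Metric.mem_ball, dist_eq_norm]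
      have h2 : ‖s • x - x‖ = (1 - s) * ‖x‖ := by
        rw [show s • x - x = -((1-s) • x) by module, norm_neg, norm_smul,
          Real.norm_eq_abs, abs_of_nonneg (by linarith)]
      calc ‖y - x‖ = ‖(y - s • x) + (s • x - x)‖ := by rw [sub_add_sub_cancel]
        _ ≤ ‖y - s • x‖ + ‖s • x - x‖ := norm_add_le _ _
        _ < m/2 + (1 - s) * ‖x‖ := by rw [h2]; linarith
        _ ≤ m/2 + (1 - s) * ρ := by nlinarith
        _ ≤ ρ := by nlinarith [min_le_right r ρ]
    · rw [Metric.mem_ball, dist_zero_right]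
      calc ‖y‖ ≤ ‖y - s • x‖ + ‖s • x‖ := by
            simpa using norm_add_le (y - s • x) (s • x)
        _ < m/2 + s * ‖x‖ := by
            rw [norm_smul, Real.norm_eq_abs, abs_of_nonneg hs0.le]; linarith
        _ ≤ m/2 + s * ρ := by nlinarith
        _ ≤ m := by rw [hsρ]; linarith
        _ ≤ r := min_le_left r ρ
  have hball : Metric.ball (0 : EuclideanSpace ℝ (Fin d)) ρ ∩ Metric.ball 0 r
      = Metric.ball 0 m := by
    ext y
    simp only [Set.mem_inter_iff, Metric.mem_ball, dist_zero_right, hm_def, lt_min_iff]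
    tauto
  rw [hball]
  calc ENNReal.ofReal ((1/2 : ℝ) ^ d) * volume (Metric.ball (0 : EuclideanSpace ℝ (Fin d)) m)
      = volume (Metric.ball (s • x) (m/2)) := by
        rw [Measure.addHaar_ball volume _ hm.le, Measure.addHaar_ball volume _ (by positivity : (0:ℝ) ≤ m/2),
          finrank_euclideanSpace_fin, ← mul_assoc, ← ENNReal.ofReal_mul (by positivity),
          ← mul_pow, show (1/2 : ℝ) * m = m/2 by ring]
    _ ≤ volume (Metric.ball x ρ ∩ Metric.ball (0 : EuclideanSpace ℝ (Fin d)) r) :=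
        measure_mono hsub

/-- For integer `d ≥ 1` there is `C > 0` depending only on `d` such that for all `ρ > 0`,
`t > 0` and `x̃ ∈ ℝ^d` with `|x̃| ≤ ρ`,
`∫_{B(x̃,ρ)} exp(-|ỹ|²/(4t)) dỹ ≥ C ∫_{B(0,ρ)} exp(-|ỹ|²/(4t)) dỹ`. -/
theorem stmt_17 (d : ℕ) (hd : 1 ≤ d) :
    ∃ C > (0:ℝ), ∀ ρ t : ℝ, 0 < ρ → 0 < t →
      ∀ x : EuclideanSpace ℝ (Fin d), ‖x‖ ≤ ρ →
        C * (∫ y in Metric.ball (0 : EuclideanSpace ℝ (Fin d)) ρ,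
              Real.exp (-‖y‖ ^ 2 / (4 * t))) ≤
          ∫ y in Metric.ball x ρ, Real.exp (-‖y‖ ^ 2 / (4 * t)) := by
  refine ⟨(1/2 : ℝ) ^ d, by positivity, fun ρ t hρ ht x hx => ?_⟩
  set f : EuclideanSpace ℝ (Fin d) → ℝ := fun y => Real.exp (-‖y‖ ^ 2 / (4 * t)) with hf_def
  have hf_cont : Continuous f := by
    apply Real.continuous_exp.comp
    continuity
  have hf_nonneg : ∀ y, 0 ≤ f y := fun y => (Real.exp_pos _).le
  have hf_le_one : ∀ y, f y ≤ 1 := fun y => Real.exp_le_one_iff.mpr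
    (div_nonpos_of_nonpos_of_nonneg (neg_nonpos.mpr (by positivity)) (by positivity))
  -- rewrite both integrals as toReal of lintegrals
  have key : ∀ z : EuclideanSpace ℝ (Fin d),
      (∫ y in Metric.ball z ρ, f y)
        = (∫⁻ y in Metric.ball z ρ, ENNReal.ofReal (f y)).toReal := fun z =>
    integral_eq_lintegral_of_nonneg_ae (Filter.Eventually.of_forall hf_nonneg)
      hf_cont.aestronglyMeasurable
  rw [key, key]
  set L0 := ∫⁻ y in Metric.ball (0 : EuclideanSpace ℝ (Fin d)) ρ, ENNReal.ofReal (f y) with hL0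
  set Lx := ∫⁻ y in Metric.ball x ρ, ENNReal.ofReal (f y) with hLx
  have hbound : ∀ z : EuclideanSpace ℝ (Fin d),
      (∫⁻ y in Metric.ball z ρ, ENNReal.ofReal (f y)) ≤ volume (Metric.ball z ρ) := by
    intro z
    calc (∫⁻ y in Metric.ball z ρ, ENNReal.ofReal (f y))
        ≤ ∫⁻ _ in Metric.ball z ρ, 1 := by
          apply lintegral_mono
          intro y
          simpa using ENNReal.ofReal_le_one.mpr (hf_le_one y)
      _ = volume (Metric.ball z ρ) := by simp
  have hL0_ne : L0 ≠ ⊤ := ((hbound 0).trans_lt measure_ball_lt_top).ne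
  have hLx_ne : Lx ≠ ⊤ := ((hbound x).trans_lt measure_ball_lt_top).ne
  -- layer cake on both sides
  have layer : ∀ z : EuclideanSpace ℝ (Fin d),
      (∫⁻ y in Metric.ball z ρ, ENNReal.ofReal (f y))
        = ∫⁻ lam in Set.Ioi (0:ℝ), (volume.restrict (Metric.ball z ρ)) {a | lam < f a} := by
    intro z
    exact lintegral_eq_lintegral_meas_lt _ (Filter.Eventually.of_forall hf_nonneg)
      hf_cont.aemeasurable
  have main : ENNReal.ofReal ((1/2 : ℝ) ^ d) * L0 ≤ Lx := by
    rw [hL0, hLx, layer 0, layer x, ← lintegral_const_mul' _ _ ENNReal.ofReal_ne_top]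
    apply setLIntegral_mono' measurableSet_Ioi
    intro lam hlam
    rw [Set.mem_Ioi] at hlam
    have hmeas : MeasurableSet {a : EuclideanSpace ℝ (Fin d) | lam < f a} :=
      measurableSet_lt measurable_const hf_cont.measurable
    rw [Measure.restrict_apply hmeas, Measure.restrict_apply hmeas]
    by_cases hR : Real.log lam < 0
    · -- the superlevel set is a ball of radius √(4t * (-log lam))
      set R : ℝ := Real.sqrt (4 * t * (- Real.log lam)) with hR_def
      have hRpos : 0 < R := Real.sqrt_pos.mpr (by nlinarith)
      have hset : {a : EuclideanSpace ℝ (Fin d) | lam < f a}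
          = Metric.ball (0 : EuclideanSpace ℝ (Fin d)) R := by
        ext a
        simp only [Set.mem_setOf_eq, Metric.mem_ball, dist_zero_right, hf_def]
        rw [← Real.log_lt_iff_lt_exp hlam, Real.lt_sqrt (norm_nonneg a),
          lt_div_iff₀ (by positivity : (0:ℝ) < 4*t)]
        constructor <;> intro h <;> nlinarith
      rw [hset, Set.inter_comm, Set.inter_comm _ (Metric.ball x ρ)]
      exact stmt_17_meas d hd ρ R hρ hRpos x hx
    · -- lam ≥ 1 : empty superlevel set
      have hset : {a : EuclideanSpace ℝ (Fin d) | lam < f a} = ∅ := by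
        ext a
        simp only [Set.mem_setOf_eq, Set.mem_empty_iff_false, iff_false, not_lt, hf_def]
        calc Real.exp (-‖a‖ ^ 2 / (4 * t)) ≤ 1 := hf_le_one a
          _ ≤ lam := by
            by_contra hcon
            push_neg at hcon
            exact hR (Real.log_neg hlam hcon)
      simp [hset]
  -- conclude
  calc (1/2 : ℝ) ^ d * L0.toReal
      = (ENNReal.ofReal ((1/2 : ℝ) ^ d) * L0).toReal := by
        rw [ENNReal.toReal_mul, ENNReal.toReal_ofReal (by positivity)]
    _ ≤ Lx.toReal := ENNReal.toReal_mono hLx_ne main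
end

section
/- Let q > 1, set E_q = (q-1)^{q-1}/q^q, and let δ > 0. There is no sequence (M_k)_{k≥0} of real numbers with M_0 > 0 such that M_k > 0 and M_k = M_{k-1} + δ M_k^q for every k ≥ 1, and δ M_k^{q-1} ≤ E_q for every k ≥ 0. (Equivalently, any such inductive construction must stop after finitely many steps.) -/
/-- For `q > 1`, `E_q = (q-1)^(q-1)/q^q` and `δ > 0`: there is no sequence `(M_k)` with
`M 0 > 0`, `M k > 0` and `M k = M (k-1) + δ (M k)^q` for all `k ≥ 1`, and
`δ (M k)^(q-1) ≤ E_q` for all `k ≥ 0`. -/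
theorem stmt_18 (q δ : ℝ) (hq : 1 < q) (hδ : 0 < δ) :
    ¬ ∃ M : ℕ → ℝ, 0 < M 0 ∧
      (∀ k : ℕ, 1 ≤ k → 0 < M k ∧ M k = M (k - 1) + δ * M k ^ q) ∧
      (∀ k : ℕ, δ * M k ^ (q - 1) ≤ (q - 1) ^ (q - 1) / q ^ q) := by
  rintro ⟨M, hM0, hrec, hbd⟩
  have hq1 : (0:ℝ) < q - 1 := by linarith
  have hpos : ∀ k, 0 < M k := by
    intro k
    cases k with
    | zero => exact hM0
    | succ n => exact (hrec (n+1) (Nat.le_add_left 1 n)).1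
  -- splitting rpow
  have hsplit : ∀ k, M k ^ q = M k ^ (q - 1) * M k := by
    intro k
    rw [show q = (q - 1) + 1 by ring, Real.rpow_add (hpos k), Real.rpow_one]
    ring_nf
  -- monotonicity
  have hmono : ∀ k, M k ≤ M (k + 1) := by
    intro k
    have h := (hrec (k+1) (Nat.le_add_left 1 k)).2
    simp only [Nat.add_sub_cancel] at h
    have hpow : 0 < δ * M (k+1) ^ q :=
      mul_pos hδ (Real.rpow_pos_of_pos (hpos (k+1)) q)
    linarith
  have hge : ∀ k, M 0 ≤ M k := by
    intro k
    induction k with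
    | zero => exact le_refl _
    | succ n ih => exact ih.trans (hmono n)
  set c : ℝ := δ * M 0 ^ (q - 1) with hc
  have hcpos : 0 < c := mul_pos hδ (Real.rpow_pos_of_pos hM0 _)
  have hstep : ∀ k, (1 + c) * M k ≤ M (k + 1) := by
    intro k
    have h := (hrec (k+1) (Nat.le_add_left 1 k)).2
    simp only [Nat.add_sub_cancel] at h
    have h1 : M 0 ^ (q - 1) ≤ M (k+1) ^ (q - 1) :=
      Real.rpow_le_rpow hM0.le ((hge k).trans (hmono k)) hq1.le
    have h3 : M 0 ^ (q-1) * M k ≤ M (k+1) ^ (q-1) * M (k+1) :=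
      mul_le_mul h1 (hmono k) (hpos k).le (Real.rpow_pos_of_pos (hpos (k+1)) _).le
    have h2 : c * M k ≤ δ * M (k+1) ^ q := by
      rw [hsplit (k+1), hc]
      have := mul_le_mul_of_nonneg_left h3 hδ.le
      linarith
    nlinarith
  have hgrow : ∀ k, (1 + c) ^ k * M 0 ≤ M k := by
    intro k
    induction k with
    | zero => simp
    | succ n ih =>
      calc (1 + c) ^ (n+1) * M 0 = (1 + c) * ((1 + c) ^ n * M 0) := by ring
        _ ≤ (1 + c) * M n := by
            apply mul_le_mul_of_nonneg_left ih; linarith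
        _ ≤ M (n + 1) := hstep n
  -- upper bound
  set E : ℝ := (q - 1) ^ (q - 1) / q ^ q with hE
  have hEpos : 0 < E :=
    div_pos (Real.rpow_pos_of_pos hq1 _) (Real.rpow_pos_of_pos (by linarith) _)
  set B : ℝ := (E / δ) ^ (1 / (q - 1)) with hB
  have hbound : ∀ k, M k ≤ B := by
    intro k
    have h1 : M k ^ (q - 1) ≤ E / δ := by
      rw [le_div_iff₀ hδ]; linarith [hbd k]
    have h2 : (M k ^ (q - 1)) ^ (1 / (q - 1)) ≤ B :=
      Real.rpow_le_rpow (Real.rpow_pos_of_pos (hpos k) _).le h1 (by positivity)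
    rwa [← Real.rpow_mul (hpos k).le,
      mul_one_div_cancel hq1.ne', Real.rpow_one] at h2
  obtain ⟨k, hk⟩ := pow_unbounded_of_one_lt (B / M 0) (by linarith : (1:ℝ) < 1 + c)
  have : B < (1 + c) ^ k * M 0 := by
    rw [div_lt_iff₀ hM0] at hk; linarith
  linarith [hgrow k, hbound k]
end
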